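/- Let A be a ring, I = (f_1, …, f_r) a finitely generated ideal, and (M_x)_{x∈S} a family of A-modules. Then the natural map (∏_x M_x)/I^n(∏_x M_x) → ∏_x (M_x/I^nM_x) is injective for all n, and the I-adic completion of ∏_x M_x is lim_n ∏_x (M_x/I^nM_x) precisely when the above maps are isomorphisms onto their images compatible with the limit; in particular the I-adic completion map (∏ M_x)^ → ∏ (M_x^) is injective with image the families that are 'uniformly' approximable. -/
import Mathlib

/-- If `J` is spanned by the range of a function from a finite type, then membership
in `J • ⊤` is equivalent to being a finite sum `∑ i, f i • a i`. -/
lemma mem_span_range_smul_top_iff {A N ι : Type*} [CommRing A] [AddCommGroup N]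
    [Module A N] [Fintype ι] (f : ι → A) (x : N) :
    x ∈ (Ideal.span (Set.range f)) • (⊤ : Submodule A N) ↔
      ∃ a : ι → N, x = ∑ i : ι, f i • a i := by
  constructor
  · intro hx
    refine Submodule.smul_induction_on hx ?_ ?_
    · intro r hr n _
      obtain ⟨c, hc⟩ := Ideal.mem_span_range_iff_exists_fun.mp hr
      refine ⟨fun i => c i • n, ?_⟩
      rw [← hc, Finset.sum_smul]
      exact Finset.sum_congr rfl fun i _ => by
        rw [mul_comm, mul_smul]
    · rintro x y ⟨a, rfl⟩ ⟨b, rfl⟩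
      exact ⟨fun i => a i + b i, by simp [Finset.sum_add_distrib, smul_add]⟩
  · rintro ⟨a, rfl⟩
    exact Submodule.sum_mem _ fun i _ =>
      Submodule.smul_mem_smul (Ideal.subset_span (Set.mem_range_self i)) trivial

lemma fg_smul_top_pi {A : Type*} [CommRing A] {J : Ideal A} (hJ : J.FG)
    {S : Type*} (M : S → Type*) [∀ x, AddCommGroup (M x)] [∀ x, Module A (M x)]
    (m : ∀ y, M y) (hm : ∀ x, m x ∈ (J • ⊤ : Submodule A (M x))) :
    m ∈ (J • ⊤ : Submodule A (∀ y, M y)) := by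
  obtain ⟨s, hs⟩ := hJ
  have hspan : J = Ideal.span (Set.range ((↑) : s → A)) := by
    rw [Subtype.range_coe]; exact hs.symm
  rw [hspan] at hm ⊢
  have h : ∀ x, ∃ a : s → M x, m x = ∑ i : s, (i : A) • a i := fun x =>
    (mem_span_range_smul_top_iff _ _).mp (hm x)
  choose g hg using h
  rw [mem_span_range_smul_top_iff]
  refine ⟨fun i x => g x i, funext fun x => ?_⟩
  rw [hg x]
  simp [Finset.sum_apply]

/-- Let `A` be a ring, `I` a finitely generated ideal and `(M x)_{x ∈ S}` a family of
`A`-modules.  Then for every `n` the kernel of the natural map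
`∏ x, M x → ∏ x, (M x ⧸ I^n M x)` equals `I^n • (∏ x, M x)` — i.e. the natural map
`(∏ x, M x)/I^n(∏ x, M x) → ∏ x, (M x ⧸ I^n M x)` is injective — and hence the induced map
on `I`-adic completions `(∏ x, M x)^ → ∏ x, (M x)^` is injective. -/
theorem ker_pi_mkQ_eq_and_adicCompletion_injective {A : Type*} [CommRing A]
    (I : Ideal A) (hI : I.FG) {S : Type*} (M : S → Type*)
    [∀ x, AddCommGroup (M x)] [∀ x, Module A (M x)] :
    (∀ n : ℕ,
      LinearMap.ker
          ((LinearMap.pi fun x =>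
            (I ^ n • ⊤ : Submodule A (M x)).mkQ.comp (LinearMap.proj x) :
              (∀ y, M y) →ₗ[A] ∀ x, M x ⧸ (I ^ n • ⊤ : Submodule A (M x)))) =
        (I ^ n • ⊤ : Submodule A (∀ y, M y))) ∧
      Function.Injective
        ((LinearMap.pi fun x =>
          (AdicCompletion.map I (LinearMap.proj x : (∀ y, M y) →ₗ[A] M x)).restrictScalars A) :
          AdicCompletion I (∀ y, M y) →ₗ[A] ∀ x, AdicCompletion I (M x)) := by
  have key : ∀ n : ℕ,
      LinearMap.ker
          ((LinearMap.pi fun x =>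
            (I ^ n • ⊤ : Submodule A (M x)).mkQ.comp (LinearMap.proj x) :
              (∀ y, M y) →ₗ[A] ∀ x, M x ⧸ (I ^ n • ⊤ : Submodule A (M x)))) =
        (I ^ n • ⊤ : Submodule A (∀ y, M y)) := by
    intro n
    ext m
    simp only [LinearMap.mem_ker, LinearMap.pi_apply, LinearMap.comp_apply,
      LinearMap.proj_apply, funext_iff, Pi.zero_apply, Submodule.mkQ_apply,
      Submodule.Quotient.mk_eq_zero]
    constructor
    · intro h
      exact fg_smul_top_pi ((Submodule.FG.pow hI n)) M m h
    · intro h x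
      have : Submodule.map (LinearMap.proj x : (∀ y, M y) →ₗ[A] M x)
          (I ^ n • ⊤ : Submodule A (∀ y, M y)) ≤ (I ^ n • ⊤ : Submodule A (M x)) := by
        rw [Submodule.map_smul'']
        exact Submodule.smul_mono le_rfl le_top
      exact this ⟨m, h, rfl⟩
  refine ⟨key, ?_⟩
  rw [injective_iff_map_eq_zero]
  intro a ha
  refine AdicCompletion.ext fun n => ?_
  obtain ⟨y, hy⟩ := Submodule.mkQ_surjective (I ^ n • ⊤ : Submodule A (∀ x, M x)) (a.val n)
  have hcomp : ∀ x, (y : ∀ y, M y) x ∈ (I ^ n • ⊤ : Submodule A (M x)) := by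
    intro x
    have hx : (AdicCompletion.map I (LinearMap.proj x : (∀ y, M y) →ₗ[A] M x)) a = 0 :=
      congrFun ha x
    have hxn := congrArg (fun z => z.val n) hx
    simp only [AdicCompletion.map_val_apply] at hxn
    rw [← hy, Submodule.mkQ_apply, LinearMap.reduceModIdeal_apply] at hxn
    simpa [AdicCompletion.val_zero, Submodule.Quotient.mk_eq_zero] using hxn
  have : y ∈ (I ^ n • ⊤ : Submodule A (∀ y, M y)) := fg_smul_top_pi ((Submodule.FG.pow hI n)) M y hcomp
  rw [AdicCompletion.val_zero, ← hy]
  simpa [Submodule.Quotient.mk_eq_zero] using this
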